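/- Let ψ ∈ L²(ℝ²) have Fourier decay of order L₂ > 1/2 in the second variable. Then there is a constant C > 0 such that for all ξ of the form ξ = (ξ₁, rξ₁) with ξ₁ ≠ 0 and |r| ≤ 3/2, ∫_1^∞ ∫_{|s|>2} |ψ̂(aξ₁, a^{1/2}(ξ₂ − sξ₁))|² a^{−3/2} ds da ≤ C |ξ₁|^{−2L₂}. -/

import Mathlib

/-
Common setup: we work on ℝ² = `EuclideanSpace ℝ (Fin 2)`.
The Fourier transform uses the paper's convention f̂(ω) = ∫ f(x) e^{2πi ω·x} dx.
Since a general L² function need not be integrable, the Fourier transform of an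
L² function `f` is represented by a function `g` together with the hypothesis
`IsFT f g`, which says that `g` is the Fourier transform of `f` in the weak
(tempered-distribution/Parseval) sense.
-/

noncomputable section
open MeasureTheory Filter Metric Complex
open scoped Real RealInnerProductSpace Pointwise

/-- The Euclidean plane ℝ². -/
abbrev E2 : Type := EuclideanSpace ℝ (Fin 2)

/-- The vector (a, b) ∈ ℝ². -/
def v2 (a b : ℝ) : E2 := WithLp.toLp 2 ![a, b]

/-- Fourier transform with the paper's convention f̂(ω) = ∫ f(x) e^{2πi ω·x} dx. -/
def FT (f : E2 → ℂ) (ω : E2) : ℂ :=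
  ∫ x : E2, Complex.exp (2 * Real.pi * Complex.I * ((⟪ω, x⟫ : ℝ) : ℂ)) * f x

/-- `g` is the (distributional) Fourier transform of `f`, expressed by the Parseval
pairing against Schwartz functions:  ∫ g·φ = ∫ f·φ̂. -/
def IsFT (f g : E2 → ℂ) : Prop :=
  ∀ φ : SchwartzMap E2 ℂ, ∫ ξ : E2, g ξ * φ ξ = ∫ x : E2, f x * FT (fun y => φ y) x

/-- L² inner product ⟨f, g⟩ = ∫ f ḡ. -/
def ip (f g : E2 → ℂ) : ℂ := ∫ x : E2, f x * (starRingEnd ℂ) (g x)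

/-- ψ_{ast}(x) = ψ((x₁−t₁−s(x₂−t₂))/a, (x₂−t₂)/√a). -/
def shDil (ψ : E2 → ℂ) (a s : ℝ) (t : E2) : E2 → ℂ := fun x =>
  ψ (v2 ((x 0 - t 0 - s * (x 1 - t 1)) / a) ((x 1 - t 1) / Real.sqrt a))

/-- Translation (Tt t f)(x) = f(x − t). -/
def Tt (t : E2) (f : E2 → ℂ) : E2 → ℂ := fun x => f (x - t)

/-- Coordinate swap (ξ₁, ξ₂) ↦ (ξ₂, ξ₁); thus ψ^ν = ψ ∘ swap2 and ψ̂^ν = ψ̂ ∘ swap2. -/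
def swap2 (ξ : E2) : E2 := v2 (ξ 1) (ξ 0)

/-- C_ψ = ∫ |ψ̂(ω)|²/|ω₁|² dω (expressed in terms of ψ̂). -/
def Cadm (hatψ : E2 → ℂ) : ℝ := ∫ ω : E2, ‖hatψ ω‖ ^ 2 / |ω 0| ^ 2

/-- ψ is a shearlet with M vanishing moments in the x₁-direction:
∫ |ψ̂(ω)|²/|ω₁|^{2M} dω < ∞ (expressed in terms of ψ̂). -/
def IsShearlet (hatψ : E2 → ℂ) (M : ℕ) : Prop :=
  Integrable (fun ω : E2 => ‖hatψ ω‖ ^ 2 / |ω 0| ^ (2 * M)) volume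

/-- Δ_ψ(ξ) = ∫_{−2}^{2}∫_0^1 |ψ̂(aξ₁, √a(ξ₂−sξ₁))|² a^{−3/2} da ds (in terms of ψ̂). -/
def Δsh (hatψ : E2 → ℂ) (ξ : E2) : ℝ :=
  ∫ s in Set.Icc (-2 : ℝ) 2, ∫ a in Set.Ioc (0 : ℝ) 1,
    ‖hatψ (v2 (a * ξ 0) (Real.sqrt a * (ξ 1 - s * ξ 0)))‖ ^ 2 * a ^ (-(3/2) : ℝ)

/-- `g` has Fourier decay of order `L` in the `i`-th variable: |g(ξ)| ≤ C|ξ_i|^{−L},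
written multiplicatively to avoid division by zero. -/
def FourierDecay (g : E2 → ℂ) (i : Fin 2) (L : ℝ) : Prop :=
  ∃ C > 0, ∀ ξ : E2, ‖g ξ‖ * |ξ i| ^ L ≤ C

/-- Indicator function of the cone 𝒞 = {ξ : |ξ₂| ≤ |ξ₁|}. -/
def coneInd : E2 → ℝ := Set.indicator {w : E2 | |w 1| ≤ |w 0|} (fun _ => (1 : ℝ))

/-- p̂₀ = Φ̂ ∗ χ_𝒞 (Φ̂ is real by assumption, so we take its real part). -/
def p0hat (Φ : E2 → ℂ) (ξ : E2) : ℝ := ∫ η : E2, (FT Φ η).re * coneInd (ξ - η)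

/-!
The decay hypothesis gives `|ψ̂(ω)|² ≲ |ω₂|^{-2L₂}`. At `ω = (aξ₁, √a (r - s) ξ₁)` with `|r| ≤ 3/2 < 2 < |s|`
we have `|r - s| ≥ |s|/4`, so the integrand is at most a constant times
`|ξ₁|^{-2L₂} · a^{-(L₂+3/2)} · (|s|/4)^{-2L₂}`. Both factors are integrable on `a > 1` and `|s| > 2`
exactly because `2L₂ > 1`, and the resulting product of integrals is the constant.
-/

open Set

lemma sq_le_mul_rpow_neg_of_mul_rpow_le {x t C L : ℝ} (hx : 0 ≤ x) (ht : 0 < t)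
    (h : x * t ^ L ≤ C) : x ^ 2 ≤ C ^ 2 * t ^ (-(2 * L)) := by
  have hx' : x ≤ C * t ^ (-L) := by
    rwa [Real.rpow_neg ht.le, ← div_eq_mul_inv, le_div_iff₀ (Real.rpow_pos_of_pos ht L)]
  calc x ^ 2 ≤ (C * t ^ (-L)) ^ 2 := pow_le_pow_left₀ hx hx' 2
    _ = C ^ 2 * t ^ (-(2 * L)) := by
      rw [mul_pow, ← Real.rpow_natCast (t ^ (-L)), ← Real.rpow_mul ht.le]
      ring_nf

lemma quarter_abs_le_abs_sub {r s : ℝ} (hr : |r| ≤ 3 / 2) (hs : 2 < |s|) :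
    |s| / 4 ≤ |r - s| := by
  have := abs_sub_abs_le_abs_sub s r
  rw [abs_sub_comm] at this
  linarith

lemma norm_sq_shear_le {g : E2 → ℂ} {L C : ℝ} (hL : 0 ≤ L)
    (hg : ∀ ξ : E2, ‖g ξ‖ * |ξ 1| ^ L ≤ C) {ξ1 r a s : ℝ} (hξ : ξ1 ≠ 0) (hr : |r| ≤ 3 / 2)
    (ha : 0 < a) (hs : 2 < |s|) :
    ‖g (v2 (a * ξ1) (√a * (r * ξ1 - s * ξ1)))‖ ^ 2
      ≤ C ^ 2 * |ξ1| ^ (-(2 * L)) * a ^ (-L) * (|s| / 4) ^ (-(2 * L)) := by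
  have hlower : √a * (|s| / 4) * |ξ1| ≤ |√a * (r * ξ1 - s * ξ1)| := by
    rw [← sub_mul, abs_mul, abs_mul, abs_of_nonneg (Real.sqrt_nonneg a), mul_assoc]
    gcongr
    exact quarter_abs_le_abs_sub hr hs
  have hpos : 0 < √a * (|s| / 4) * |ξ1| := by
    have : 0 < |s| := by linarith
    positivity
  calc ‖g (v2 (a * ξ1) (√a * (r * ξ1 - s * ξ1)))‖ ^ 2
      ≤ C ^ 2 * |√a * (r * ξ1 - s * ξ1)| ^ (-(2 * L)) :=
        sq_le_mul_rpow_neg_of_mul_rpow_le (norm_nonneg _) (hpos.trans_le hlower) (hg _)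
    _ ≤ C ^ 2 * (√a * (|s| / 4) * |ξ1|) ^ (-(2 * L)) :=
        mul_le_mul_of_nonneg_left (Real.rpow_le_rpow_of_nonpos hpos hlower (by linarith))
          (sq_nonneg C)
    _ = C ^ 2 * |ξ1| ^ (-(2 * L)) * a ^ (-L) * (|s| / 4) ^ (-(2 * L)) := by
      rw [Real.mul_rpow (by positivity) (abs_nonneg _),
        Real.mul_rpow (Real.sqrt_nonneg a) (by positivity), Real.sqrt_eq_rpow,
        ← Real.rpow_mul ha.le]
      ring_nf

lemma shear_integrand_le {g : E2 → ℂ} {L C : ℝ} (hL : 0 ≤ L)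
    (hg : ∀ ξ : E2, ‖g ξ‖ * |ξ 1| ^ L ≤ C) {ξ1 r a s : ℝ} (hξ : ξ1 ≠ 0) (hr : |r| ≤ 3 / 2)
    (ha : 0 < a) (hs : 2 < |s|) :
    ‖g (v2 (a * ξ1) (√a * (r * ξ1 - s * ξ1)))‖ ^ 2 * a ^ (-(3 / 2) : ℝ)
      ≤ C ^ 2 * |ξ1| ^ (-(2 * L)) * a ^ (-(L + 3 / 2)) * (|s| / 4) ^ (-(2 * L)) :=
  calc _ ≤ C ^ 2 * |ξ1| ^ (-(2 * L)) * a ^ (-L) * (|s| / 4) ^ (-(2 * L)) * a ^ (-(3 / 2) : ℝ) :=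
        mul_le_mul_of_nonneg_right (norm_sq_shear_le hL hg hξ hr ha hs) (Real.rpow_nonneg ha.le _)
    _ = _ := by rw [neg_add, Real.rpow_add ha]; ring

lemma integrableOn_abs_rpow_of_lt_abs {p c : ℝ} (hp : p < -1) (hc : 0 < c) :
    IntegrableOn (fun s : ℝ => |s| ^ p) {s | c < |s|} := by
  have hIoi : IntegrableOn (fun s : ℝ => |s| ^ p) (Ioi c) :=
    (integrableOn_Ioi_rpow_of_lt hp hc).congr_fun
      (fun s hs => by rw [abs_of_pos (hc.trans hs)]) measurableSet_Ioi
  have hIio : IntegrableOn (fun s : ℝ => |s| ^ p) (Iio (-c)) := by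
    simpa only [abs_neg] using
      IntegrableOn.comp_neg_Iio (c := -c) (f := fun s : ℝ => |s| ^ p) (by rwa [neg_neg])
  have hsplit : {s : ℝ | c < |s|} = Iio (-c) ∪ Ioi c := by
    ext s
    simp [lt_abs, or_comm, lt_neg]
  rw [hsplit]
  exact hIio.union hIoi

lemma setIntegral_setIntegral_le_mul {α β : Type*} [MeasurableSpace α] [MeasurableSpace β]
    {μ : Measure α} {ν : Measure β} {A : Set α} {B : Set β} (hA : MeasurableSet A)
    (hB : MeasurableSet B) {F : α → β → ℝ} {f : α → ℝ} {g : β → ℝ}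
    (hF : ∀ a ∈ A, ∀ b ∈ B, 0 ≤ F a b) (hFfg : ∀ a ∈ A, ∀ b ∈ B, F a b ≤ f a * g b)
    (hf : IntegrableOn f A μ) (hg : IntegrableOn g B ν) :
    ∫ a in A, ∫ b in B, F a b ∂ν ∂μ ≤ (∫ a in A, f a ∂μ) * ∫ b in B, g b ∂ν := by
  rw [← integral_mul_const]
  refine integral_mono_of_nonneg ((ae_restrict_iff' hA).2 (.of_forall fun a ha => ?_))
    (hf.mul_const _) ((ae_restrict_iff' hA).2 (.of_forall fun a ha => ?_))
  · exact setIntegral_nonneg hB (hF a ha)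
  · beta_reduce
    rw [← integral_const_mul]
    exact integral_mono_of_nonneg ((ae_restrict_iff' hB).2 (.of_forall (hF a ha)))
      (hg.const_mul _) ((ae_restrict_iff' hB).2 (.of_forall (hFfg a ha)))

theorem low_frequency_large_shear_estimate_general
    (hatψ : E2 → ℂ) (L2 : ℝ) (hL2 : 1/2 < L2)
    (hdec : FourierDecay hatψ 1 L2) :
    ∃ C > 0, ∀ ξ1 r : ℝ, ξ1 ≠ 0 → |r| ≤ 3/2 →
      (∫ a in Set.Ioi (1 : ℝ), ∫ s in {s : ℝ | 2 < |s|},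
          ‖hatψ (v2 (a * ξ1) (Real.sqrt a * (r * ξ1 - s * ξ1)))‖ ^ 2 * a ^ (-(3/2) : ℝ))
        * |ξ1| ^ (2 * L2) ≤ C := by
  obtain ⟨C₀, -, hC₀⟩ := hdec
  set Ka := ∫ a in Ioi (1 : ℝ), a ^ (-(L2 + 3 / 2))
  set Ks := ∫ s in {s : ℝ | 2 < |s|}, (|s| / 4) ^ (-(2 * L2))
  refine ⟨max 1 (C₀ ^ 2 * Ka * Ks), lt_max_of_lt_left one_pos, fun ξ1 r hξ hr => ?_⟩
  have hIa : IntegrableOn (fun a : ℝ => C₀ ^ 2 * |ξ1| ^ (-(2 * L2)) * a ^ (-(L2 + 3 / 2)))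
      (Ioi 1) :=
    ((integrableOn_Ioi_rpow_iff one_pos).2 (by linarith)).const_mul _
  have hIs : IntegrableOn (fun s : ℝ => (|s| / 4) ^ (-(2 * L2))) {s | 2 < |s|} :=
    IntegrableOn.congr_fun
      ((integrableOn_abs_rpow_of_lt_abs (p := -(2 * L2)) (by linarith) two_pos).div_const _)
      (fun s _ => (Real.div_rpow (abs_nonneg s) (by norm_num) _).symm)
      (measurableSet_lt measurable_const measurable_abs)
  calc _ ≤ (∫ a in Ioi 1, C₀ ^ 2 * |ξ1| ^ (-(2 * L2)) * a ^ (-(L2 + 3 / 2))) * Ks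
        * |ξ1| ^ (2 * L2) := by
        gcongr
        exact setIntegral_setIntegral_le_mul measurableSet_Ioi
          (measurableSet_lt measurable_const measurable_abs)
          (fun a ha s _ => mul_nonneg (sq_nonneg _) (Real.rpow_nonneg (zero_le_one.trans ha.le) _))
          (fun a ha s hs => shear_integrand_le (by linarith) hC₀ hξ hr (zero_lt_one.trans ha) hs)
          hIa hIs
    _ = C₀ ^ 2 * Ka * Ks := by
      have hξL : |ξ1| ^ (2 * L2) ≠ 0 := by positivity
      rw [integral_const_mul, Real.rpow_neg (abs_nonneg _)]
      linear_combination C₀ ^ 2 * Ka * Ks * inv_mul_cancel₀ hξL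
    _ ≤ _ := le_max_right _ _

/-- if ψ̂ has Fourier decay of order L₂ > 1/2 in the second variable and
ξ = (ξ₁, rξ₁), |r| ≤ 3/2, then
∫_1^∞∫_{|s|>2} |ψ̂(aξ₁, √a(ξ₂ − sξ₁))|² a^{−3/2} ds da ≤ C|ξ₁|^{−2L₂}. -/
theorem low_frequency_large_shear_estimate
    (ψ hatψ : E2 → ℂ) (L2 : ℝ) (hL2 : 1/2 < L2)
    (hψ2 : MemLp ψ 2 (volume : Measure E2)) (hFT : IsFT ψ hatψ)
    (hdec : FourierDecay hatψ 1 L2) :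
    ∃ C > 0, ∀ ξ1 r : ℝ, ξ1 ≠ 0 → |r| ≤ 3/2 →
      (∫ a in Set.Ioi (1 : ℝ), ∫ s in {s : ℝ | 2 < |s|},
          ‖hatψ (v2 (a * ξ1) (Real.sqrt a * (r * ξ1 - s * ξ1)))‖ ^ 2 * a ^ (-(3/2) : ℝ))
        * |ξ1| ^ (2 * L2) ≤ C :=
  low_frequency_large_shear_estimate_general hatψ L2 hL2 hdec
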